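/- Let M be a positive integer, χ a primitive Dirichlet character modulo M, q a positive integer with gcd(q, M) = 1, a an integer, and g : ℝ → ℂ a Schwartz function. Then Σ_{m∈ℤ} χ(m) e^{−2πiam/q} g(m) = (τ(χ) χ(q) / M) · Σ_{h∈ℤ, h ≡ aM (mod q)} χ̄(h) ĝ(h/(Mq)), where both series converge absolutely. -/

import Mathlib

/-!
The coefficient `m ↦ χ(m) e(-am/q)` is periodic modulo `N = Mq`, i.e. a function `Φ` on `ZMod N`.
Splitting `ℤ` into residue classes modulo `N` and applying Poisson summation in each class gives
`∑ Φ(m) g(m) = ∑ Φ̌(h) ĝ(h/N)`, where `Φ̌` is the inverse discrete Fourier transform of `Φ`.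
Writing `ZMod N` as `q ZMod M + M ZMod q` (Chinese remainder theorem), the sum
`N Φ̌(h) = ∑_r χ(r) e((h - aM)r/N)` factors into `∑_s χ(qs) e((h - aM)s/M) = χ(q) χ̄(h) τ(χ)`
(`χ` primitive) and `∑_t e((h - aM)t/q)`, which is `q` or `0` according as `h ≡ aM (mod q)` or not.
-/

open MeasureTheory

/-- The Fourier transform `ĝ(ξ) = ∫_ℝ g(y) e^{-2πiξy} dy`. -/
noncomputable def fourierHat (g : ℝ → ℂ) (ξ : ℝ) : ℂ :=
  ∫ y : ℝ, g y * Complex.exp (-(2 * Real.pi * Complex.I * ξ * y))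

/-- The Gauss sum `τ(χ) = ∑_{b=1}^{M} χ(b) e^{2πib/M}`. -/
noncomputable def gaussSumExp (M : ℕ) (χ : DirichletCharacter ℂ M) : ℂ :=
  ∑ b ∈ Finset.Icc 1 M, χ (b : ZMod M) * Complex.exp (2 * Real.pi * Complex.I * b / M)

open scoped FourierTransform SchwartzMap
open ZMod

theorem fourierHat_eq_fourier (g : ℝ → ℂ) (ξ : ℝ) : fourierHat g ξ = 𝓕 g ξ := by
  rw [Real.fourier_real_eq_integral_exp_smul, fourierHat]
  congr 1 with y
  rw [smul_eq_mul, mul_comm]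
  push_cast
  ring_nf

theorem gaussSumExp_eq_gaussSum (M : ℕ) [NeZero M] (χ : DirichletCharacter ℂ M) :
    gaussSumExp M χ = gaussSum χ stdAddChar := by
  have hinj : Set.InjOn (fun b : ℕ => (b : ZMod M)) (Finset.Icc 1 M) := by
    intro b hb b' hb' h
    simp only [Finset.coe_Icc, Set.mem_Icc] at hb hb'
    exact ((natCast_eq_natCast_iff _ _ _).mp h).eq_of_abs_lt
      (abs_sub_lt_iff.mpr ⟨by omega, by omega⟩)
  have himage : (Finset.Icc 1 M).image (fun b : ℕ => (b : ZMod M)) = Finset.univ :=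
    Finset.eq_univ_of_card _ (by rw [Finset.card_image_of_injOn hinj, Nat.card_Icc, card]; omega)
  rw [gaussSum, ← himage, Finset.sum_image hinj, gaussSumExp]
  refine Finset.sum_congr rfl fun b _ => ?_
  rw [← Int.cast_natCast (R := ZMod M), stdAddChar_coe]
  push_cast
  rfl

theorem Real.fourier_comp_mul_right {E : Type*} [NormedAddCommGroup E] [NormedSpace ℂ E]
    (f : ℝ → E) {c : ℝ} (hc : c ≠ 0) (w : ℝ) :
    𝓕 (fun x => f (x * c)) w = |c⁻¹| • 𝓕 f (w / c) := by
  simp only [Real.fourier_real_eq]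
  have hw (v : ℝ) : v * w = v * c * (w / c) := by field_simp
  simp_rw [hw]
  exact Measure.integral_comp_mul_right (fun u => 𝐞 (-(u * (w / c))) • f u) c

namespace SchwartzMap

section

variable {E : Type*} [NormedAddCommGroup E] [NormedSpace ℝ E]

theorem summable_norm_intCast (f : 𝓢(ℝ, E)) : Summable fun n : ℤ => ‖f n‖ := by
  have h := (f.isBigO_cocompact_rpow (-2)).norm_left.comp_tendsto Int.tendsto_coe_cofinite
  exact summable_of_isBigO (Real.summable_abs_int_rpow one_lt_two)
    (by simpa [Real.norm_eq_abs, Function.comp_def] using h)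

noncomputable def compMulRight (f : 𝓢(ℝ, E)) {c : ℝ} (hc : c ≠ 0) : 𝓢(ℝ, E) :=
  compCLMOfContinuousLinearEquiv ℝ (.unitsEquivAut ℝ (.mk0 c hc)) f

@[simp] theorem compMulRight_apply (f : 𝓢(ℝ, E)) {c : ℝ} (hc : c ≠ 0) (x : ℝ) :
    f.compMulRight hc x = f (x * c) := rfl

theorem summable_norm_intCast_div (f : 𝓢(ℝ, E)) {c : ℝ} (hc : c ≠ 0) :
    Summable fun n : ℤ => ‖f (n / c)‖ := by
  simpa only [compMulRight_apply, div_eq_mul_inv] using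
    (f.compMulRight (inv_ne_zero hc)).summable_norm_intCast

end

theorem tsum_add_mul_natCast_eq (g : 𝓢(ℝ, ℂ)) (N : ℕ) [NeZero N] (j : ℤ) :
    ∑' n : ℤ, g (j + n * N) =
      (N : ℂ)⁻¹ * ∑' h : ℤ, 𝓕 g (h / N) * stdAddChar ((h * j : ℤ) : ZMod N) := by
  have hN : (N : ℝ) ≠ 0 := Nat.cast_ne_zero.mpr (NeZero.ne N)
  have hscale (w : ℝ) : 𝓕 (g.compMulRight hN) w = |(N : ℝ)⁻¹| • 𝓕 g (w / N) :=
    Real.fourier_comp_mul_right g hN w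
  have hpoisson := (g.compMulRight hN).tsum_eq_tsum_fourier (j / N)
  simp only [compMulRight_apply, add_mul, div_mul_cancel₀ _ hN, fourier_coe_apply,
    hscale] at hpoisson
  rw [hpoisson, ← tsum_mul_left]
  congr 1 with h
  rw [stdAddChar_coe, abs_of_pos (by positivity), Complex.real_smul]
  push_cast
  field_simp

end SchwartzMap

theorem ZMod.norm_stdAddChar {N : ℕ} [NeZero N] (x : ZMod N) : ‖stdAddChar x‖ = 1 :=
  Circle.norm_coe _

theorem ZMod.val_finEquiv_symm (N : ℕ) [NeZero N] (r : ZMod N) :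
    (((finEquiv N).symm r : Fin N) : ℕ) = r.val := by
  obtain ⟨N, rfl⟩ := Nat.exists_eq_succ_of_ne_zero (NeZero.ne N)
  rfl

theorem tsum_int_eq_sum_zmod_tsum {E : Type*} [NormedAddCommGroup E] [CompleteSpace E]
    {F : ℤ → E} (hF : Summable F) (N : ℕ) [NeZero N] :
    ∑' m : ℤ, F m = ∑ r : ZMod N, ∑' n : ℤ, F (r.val + n * N) := by
  let e : ZMod N × ℤ ≃ ℤ := ((finEquiv N).toEquiv.symm.prodCongr (Equiv.refl ℤ)).trans
    ((Equiv.prodComm _ _).trans (Int.divModEquiv N).symm)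
  have he (p : ZMod N × ℤ) : e p = p.1.val + p.2 * N := by
    simp [e, val_finEquiv_symm, add_comm]
  have hFe : Summable fun p => F (e p) := e.summable_iff.mpr hF
  rw [← e.tsum_eq, hFe.tsum_prod' (fun r => hFe.comp_injective (Prod.mk_right_injective r)),
    tsum_fintype]
  simp only [he]

theorem SchwartzMap.tsum_zmod_mul_eq_tsum_invDFT_mul_fourier {N : ℕ} [NeZero N]
    (Φ : ZMod N → ℂ) (g : 𝓢(ℝ, ℂ)) :
    ∑' m : ℤ, Φ m * g m = ∑' h : ℤ, dft.symm Φ h * 𝓕 g (h / N) := by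
  have hN : (N : ℝ) ≠ 0 := Nat.cast_ne_zero.mpr (NeZero.ne N)
  have hsum : Summable fun m : ℤ => Φ m * g m :=
    Summable.of_norm_bounded (g.summable_norm_intCast.mul_left ‖Φ‖) fun m => by
      rw [norm_mul]
      gcongr
      exact norm_le_pi_norm Φ _
  have hsum_fourier (r : ZMod N) :
      Summable fun h : ℤ => (N : ℂ)⁻¹ * Φ r * (𝓕 g (h / N) * stdAddChar ((h : ZMod N) * r)) := by
    refine Summable.mul_left _ (Summable.of_norm ?_)
    simpa [norm_stdAddChar] using (𝓕 g).summable_norm_intCast_div hN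
  calc ∑' m : ℤ, Φ m * g m
      = ∑ r : ZMod N, Φ r * ∑' n : ℤ, g (r.val + n * N) := by
        rw [tsum_int_eq_sum_zmod_tsum hsum N]
        congr 1 with r
        rw [← tsum_mul_left]
        congr 1 with n
        push_cast
        simp
    _ = ∑' h : ℤ, ∑ r : ZMod N,
          (N : ℂ)⁻¹ * Φ r * (𝓕 g (h / N) * stdAddChar ((h : ZMod N) * r)) := by
        rw [Summable.tsum_finsetSum fun r _ => hsum_fourier r]
        congr 1 with r
        rw [← Int.cast_natCast, g.tsum_add_mul_natCast_eq, ← tsum_mul_left, ← tsum_mul_left]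
        congr 1 with h
        rw [Int.cast_mul, Int.cast_natCast, natCast_val, cast_id', id]
        ring
    _ = ∑' h : ℤ, dft.symm Φ h * 𝓕 g (h / N) := by
        congr 1 with h
        simp only [invDFT_apply', dft_apply, smul_eq_mul, Finset.mul_sum, Finset.sum_mul]
        congr 1 with r
        rw [mul_neg, neg_neg, mul_comm r]
        ring

theorem ZMod.stdAddChar_natCast_mul {d e N : ℕ} [NeZero d] [NeZero N] (hN : d * e = N)
    (x : ZMod N) :
    stdAddChar ((e : ZMod N) * x) = stdAddChar (castHom (Dvd.intro e hN) (ZMod d) x) := by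
  obtain ⟨j, rfl⟩ := intCast_surjective x
  have he : e ≠ 0 := by rintro rfl; exact NeZero.ne N (by simpa using hN.symm)
  rw [map_intCast, ← Int.cast_natCast, ← Int.cast_mul, stdAddChar_coe, stdAddChar_coe]
  subst hN
  push_cast
  field_simp

theorem ZMod.sum_castHom_mul_stdAddChar {M q : ℕ} [NeZero M] [NeZero q] (hqM : q.Coprime M)
    (f : ZMod M → ℂ) (k : ZMod (M * q)) :
    ∑ r : ZMod (M * q), f (castHom (dvd_mul_right M q) (ZMod M) r) * stdAddChar (r * k) =
      (∑ s : ZMod M, f (q * s) * stdAddChar (s * castHom (dvd_mul_right M q) (ZMod M) k)) *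
        ∑ t : ZMod q, stdAddChar (t * castHom (dvd_mul_left q M) (ZMod q) k) := by
  set πM := castHom (dvd_mul_right M q) (ZMod M)
  set πq := castHom (dvd_mul_left q M) (ZMod q)
  let φ : ZMod M × ZMod q → ZMod (M * q) := fun p => q * (p.1.val : ZMod (M * q)) + M * p.2.val
  have hπM (p : ZMod M × ZMod q) : πM (φ p) = q * p.1 := by
    simp only [φ, map_add, map_mul, map_natCast, natCast_self, zero_mul, add_zero, natCast_zmod_val]
  have hπq (p : ZMod M × ZMod q) : πq (φ p) = M * p.2 := by
    simp only [φ, map_add, map_mul, map_natCast, natCast_self, zero_mul, zero_add, natCast_zmod_val]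
  have hφ : Function.Bijective φ := by
    rw [Fintype.bijective_iff_injective_and_card]
    refine ⟨fun p p' h => Prod.ext ?_ ?_, by simp⟩
    · exact ((isUnit_iff_coprime q M).mpr hqM).mul_left_cancel (by rw [← hπM, ← hπM, h])
    · exact ((isUnit_iff_coprime M q).mpr hqM.symm).mul_left_cancel (by rw [← hπq, ← hπq, h])
  rw [← Fintype.sum_bijective φ hφ (fun p => f (πM (φ p)) * stdAddChar (φ p * k)) _
    fun _ => rfl, Fintype.sum_prod_type, Finset.sum_mul_sum]
  refine Finset.sum_congr rfl fun s _ => Finset.sum_congr rfl fun t _ => ?_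
  rw [hπM, add_mul, AddChar.map_add_eq_mul, mul_assoc, mul_assoc,
    stdAddChar_natCast_mul rfl, stdAddChar_natCast_mul (mul_comm q M)]
  simp only [map_mul, map_natCast, natCast_zmod_val]
  ring

namespace DirichletCharacter

variable {M : ℕ} [NeZero M] (χ : DirichletCharacter ℂ M) (q : ℕ) [NeZero q]

noncomputable def twistedLift (b r : ZMod (M * q)) : ℂ :=
  χ (castHom (dvd_mul_right M q) (ZMod M) r) * stdAddChar (r * b)

theorem norm_twistedLift_le_one (b r : ZMod (M * q)) : ‖χ.twistedLift q b r‖ ≤ 1 := by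
  simpa only [twistedLift, norm_mul, norm_stdAddChar, mul_one] using χ.norm_le_one _

theorem twistedLift_mul_stdAddChar (b c r : ZMod (M * q)) :
    χ.twistedLift q b r * stdAddChar (r * c) = χ.twistedLift q (b + c) r := by
  rw [twistedLift, twistedLift, mul_add, AddChar.map_add_eq_mul, mul_assoc]

variable {χ q}

theorem IsPrimitive.sum_twistedLift (hχ : χ.IsPrimitive) (hqM : q.Coprime M) (k : ZMod (M * q)) :
    ∑ r, χ.twistedLift q k r =
      χ q * χ⁻¹ (castHom (dvd_mul_right M q) (ZMod M) k) * gaussSum χ stdAddChar *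
        if castHom (dvd_mul_left q M) (ZMod q) k = 0 then (q : ℂ) else 0 := by
  simp only [twistedLift]
  rw [ZMod.sum_castHom_mul_stdAddChar hqM, AddChar.sum_mulShift _ (isPrimitive_stdAddChar q),
    card, Nat.cast_ite, Nat.cast_zero, mul_assoc _ (χ⁻¹ _),
    ← gaussSum_mulShift_of_isPrimitive _ hχ, gaussSum, Finset.mul_sum]
  congr 1
  refine Finset.sum_congr rfl fun s _ => ?_
  rw [map_mul, AddChar.mulShift_apply, mul_comm s]
  ring

theorem IsPrimitive.invDFT_twistedLift (hχ : χ.IsPrimitive) (hqM : q.Coprime M) (b h : ℤ) :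
    dft.symm (χ.twistedLift q ((-(b * M) : ℤ) : ZMod (M * q))) h =
      gaussSum χ stdAddChar * χ q / M *
        if (h : ZMod q) = ((b * M : ℤ) : ZMod q) then starRingEnd ℂ (χ h) else 0 := by
  have hmodM : ((h - b * M : ℤ) : ZMod M) = h := by push_cast; simp
  have hmodq : ((h - b * M : ℤ) : ZMod q) = 0 ↔ (h : ZMod q) = ((b * M : ℤ) : ZMod q) := by
    rw [Int.cast_sub, sub_eq_zero]
  have hM : (M : ℂ) ≠ 0 := Nat.cast_ne_zero.mpr (NeZero.ne M)
  have hq : (q : ℂ) ≠ 0 := Nat.cast_ne_zero.mpr (NeZero.ne q)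
  simp only [invDFT_apply', dft_apply, smul_eq_mul, mul_neg, neg_neg, mul_comm (stdAddChar _),
    twistedLift_mul_stdAddChar]
  rw [← Int.cast_add, neg_add_eq_sub, hχ.sum_twistedLift hqM,
    map_intCast (castHom (dvd_mul_right M q) (ZMod M)),
    map_intCast (castHom (dvd_mul_left q M) (ZMod q)), hmodM, ← MulChar.star_apply']
  by_cases hres : (h : ZMod q) = ((b * M : ℤ) : ZMod q)
  · rw [if_pos (hmodq.mpr hres), if_pos hres, Nat.cast_mul, starRingEnd_apply]
    field_simp
  · rw [if_neg (mt hmodq.mp hres), if_neg hres, mul_zero, mul_zero, mul_zero]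

end DirichletCharacter

theorem summable_norm_mul_of_norm_le_one {ι R : Type*} [SeminormedRing R] {f g : ι → R}
    (hf : ∀ i, ‖f i‖ ≤ 1) (hg : Summable fun i => ‖g i‖) : Summable fun i => ‖f i * g i‖ :=
  hg.of_nonneg_of_le (fun _ => norm_nonneg _) fun i =>
    (norm_mul_le _ _).trans (mul_le_of_le_one_left (norm_nonneg _) (hf i))

/-- Twisted Poisson summation: for a primitive character `χ mod M`, `gcd(q,M)=1`, and a
Schwartz function `g`,
`∑_m χ(m) e^{-2πiam/q} g(m) = (τ(χ)χ(q)/M) ∑_{h ≡ aM (mod q)} χ̄(h) ĝ(h/(Mq))`,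
both series converging absolutely. -/
theorem twisted_poisson_summation
    (M : ℕ) (hM : 0 < M) (χ : DirichletCharacter ℂ M) (hχ : χ.IsPrimitive)
    (q : ℕ) (hq : 0 < q) (hqM : Nat.gcd q M = 1) (a : ℤ) (g : SchwartzMap ℝ ℂ) :
    Summable (fun m : ℤ =>
      ‖χ (m : ZMod M) * Complex.exp (-(2 * Real.pi * Complex.I * a * m / q)) * g m‖) ∧
    Summable (fun h : ℤ =>
      ‖if (h : ZMod q) = ((a * M : ℤ) : ZMod q) then
          (starRingEnd ℂ) (χ (h : ZMod M)) * fourierHat g ((h : ℝ) / (M * q))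
        else 0‖) ∧
    (∑' m : ℤ, χ (m : ZMod M) *
        Complex.exp (-(2 * Real.pi * Complex.I * a * m / q)) * g m) =
      (gaussSumExp M χ * χ (q : ZMod M) / M) *
        ∑' h : ℤ,
          if (h : ZMod q) = ((a * M : ℤ) : ZMod q) then
            (starRingEnd ℂ) (χ (h : ZMod M)) * fourierHat g ((h : ℝ) / (M * q))
          else 0 := by
  have : NeZero M := ⟨hM.ne'⟩
  have : NeZero q := ⟨hq.ne'⟩
  have hcoeff (m : ℤ) : χ m * Complex.exp (-(2 * Real.pi * Complex.I * a * m / q)) =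
      χ.twistedLift q ((-(a * M) : ℤ) : ZMod (M * q)) m := by
    have hM0 : (M : ℂ) ≠ 0 := Nat.cast_ne_zero.mpr hM.ne'
    simp only [DirichletCharacter.twistedLift, map_intCast, ← Int.cast_mul, stdAddChar_coe]
    congr 2
    push_cast
    field_simp
  have hN : ((M * q : ℕ) : ℝ) ≠ 0 := by positivity
  have hF (h : ℤ) : fourierHat g (h / (M * q)) = 𝓕 g (h / (M * q : ℕ)) := by
    rw [fourierHat_eq_fourier, Nat.cast_mul]
    rfl
  refine ⟨?_, ?_, ?_⟩
  · simp_rw [hcoeff]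
    exact summable_norm_mul_of_norm_le_one (fun m => χ.norm_twistedLift_le_one q _ m)
      g.summable_norm_intCast
  · simp_rw [hF, ← ite_zero_mul]
    refine summable_norm_mul_of_norm_le_one (fun h => ?_) ((𝓕 g).summable_norm_intCast_div hN)
    split_ifs
    · simpa using χ.norm_le_one _
    · simp
  · simp_rw [hcoeff, g.tsum_zmod_mul_eq_tsum_invDFT_mul_fourier, hχ.invDFT_twistedLift hqM,
      gaussSumExp_eq_gaussSum, hF, ← tsum_mul_left]
    congr 1 with h
    split_ifs <;> ring
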